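/- arXiv:2004.12369 — 3 statements merged into one kernel-verified Lean document; each statement's English description precedes it below -/
import Mathlib

section
/- Let s_U > 0, s_V > 0, m ∈ ℝ, ζ ∈ ℝ, and set σ = √(s_U² + s_V²) and λ = s_U/s_V. Then for every ε ∈ ℝ: ∫_0^∞ (1/s_V) φ((ε + u − m)/s_V) · (1/s_U)[φ((u − ζ)/s_U) + φ((u + ζ)/s_U)] du = (1/σ)[Φ(ζ/(λσ) − λ(ε − m)/σ) φ((ε − m + ζ)/σ) + Φ(−ζ/(λσ) − λ(ε − m)/σ) φ((ε − m − ζ)/σ)]. In words: the convolution of a normal density with mean m and variance s_V² and a folded normal density with location ζ and scale s_U², truncated to u ≥ 0, has the stated closed form; this is the conditional density of the composite error term ε = V − U given the control functions in the normal–folded-normal stochastic frontier model. -/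
/-!
Split the folded normal density into its two normal components. Completing the square, the
product of the normal densities of `u` with means `μ₁, μ₂` and scales `s₁, s₂` is the normal
density of `μ₁ - μ₂` with variance `s₁² + s₂²` times a normal density of `u` with variance
`s₁² s₂² / (s₁² + s₂²)`, and the mass of the latter on `(0, ∞)` is a value of `Φ`.
-/

open MeasureTheory Set Real

/-- The standard normal density. -/
noncomputable def stdNormalPDF (x : ℝ) : ℝ :=
  (Real.sqrt (2 * Real.pi))⁻¹ * Real.exp (-x ^ 2 / 2)

/-- The standard normal cumulative distribution function. -/
noncomputable def stdNormalCDF (x : ℝ) : ℝ :=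
  ∫ t in Set.Iio x, stdNormalPDF t

/-- `s` is the standard deviation, not the variance. -/
noncomputable def normalPDF (μ s u : ℝ) : ℝ := 1 / s * stdNormalPDF ((u - μ) / s)

lemma stdNormalPDF_neg (x : ℝ) : stdNormalPDF (-x) = stdNormalPDF x := by
  simp [stdNormalPDF]

lemma integrable_stdNormalPDF : Integrable stdNormalPDF := by
  have h : stdNormalPDF = fun x => (√(2 * π))⁻¹ * rexp (-(1 / 2) * x ^ 2) := by
    ext x; simp only [stdNormalPDF]; ring_nf
  rw [h]
  exact (integrable_exp_neg_mul_sq (by norm_num)).const_mul _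

lemma integrable_normalPDF (μ s : ℝ) (hs : s ≠ 0) : Integrable (normalPDF μ s) :=
  ((integrable_stdNormalPDF.comp_div hs).comp_sub_right μ).const_mul _

lemma setIntegral_Ioi_comp_add_right (f : ℝ → ℝ) (a c : ℝ) :
    ∫ x in Ioi c, f (x + a) = ∫ x in Ioi (c + a), f x := by
  simpa using (measurePreserving_add_right volume a).setIntegral_preimage_emb
    (measurableEmbedding_addRight a) f (Ioi (c + a))

lemma stdNormalCDF_eq_setIntegral_Ioi_neg (x : ℝ) :
    stdNormalCDF x = ∫ t in Ioi (-x), stdNormalPDF t := by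
  rw [stdNormalCDF, ← integral_Iic_eq_integral_Iio, ← neg_neg x, ← integral_comp_neg_Ioi]
  simp [stdNormalPDF_neg]

lemma setIntegral_Ioi_normalPDF (μ s : ℝ) (hs : 0 < s) :
    ∫ u in Ioi 0, normalPDF μ s u = stdNormalCDF (μ / s) := by
  have h : ∀ u, normalPDF μ s u = 1 / s * stdNormalPDF (u * s⁻¹ + -(μ / s)) := by
    intro u; rw [normalPDF]; ring_nf
  calc ∫ u in Ioi 0, normalPDF μ s u
      = 1 / s * ∫ u in Ioi 0, stdNormalPDF (u * s⁻¹ + -(μ / s)) := by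
        simp_rw [h, integral_const_mul]
    _ = ∫ t in Ioi (-(μ / s)), stdNormalPDF t := by
        rw [integral_comp_mul_right_Ioi (fun t => stdNormalPDF (t + -(μ / s))) 0 (inv_pos.2 hs),
          zero_mul, setIntegral_Ioi_comp_add_right, zero_add, inv_inv, smul_eq_mul, ← mul_assoc,
          one_div_mul_cancel hs.ne', one_mul]
    _ = stdNormalCDF (μ / s) := (stdNormalCDF_eq_setIntegral_Ioi_neg _).symm

lemma stdNormalPDF_mul_stdNormalPDF_of_sq_add_sq_eq {a b c d : ℝ}
    (h : a ^ 2 + b ^ 2 = c ^ 2 + d ^ 2) :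
    stdNormalPDF a * stdNormalPDF b = stdNormalPDF c * stdNormalPDF d := by
  simp only [stdNormalPDF]
  rw [mul_mul_mul_comm, ← exp_add, mul_mul_mul_comm _ (rexp _), ← exp_add]
  congr 2
  linarith

lemma normalPDF_mul_normalPDF (μ₁ μ₂ : ℝ) {s₁ s₂ : ℝ} (h₁ : s₁ ≠ 0) (h₂ : s₂ ≠ 0) (u : ℝ) :
    normalPDF μ₁ s₁ u * normalPDF μ₂ s₂ u =
      normalPDF μ₂ √(s₁ ^ 2 + s₂ ^ 2) μ₁ *
        normalPDF ((μ₁ * s₂ ^ 2 + μ₂ * s₁ ^ 2) / (s₁ ^ 2 + s₂ ^ 2))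
          (s₁ * s₂ / √(s₁ ^ 2 + s₂ ^ 2)) u := by
  have hpos : 0 < s₁ ^ 2 + s₂ ^ 2 := by positivity
  have hσ_ne : √(s₁ ^ 2 + s₂ ^ 2) ≠ 0 := (sqrt_pos.2 hpos).ne'
  have hσsq : √(s₁ ^ 2 + s₂ ^ 2) ^ 2 = s₁ ^ 2 + s₂ ^ 2 := sq_sqrt hpos.le
  set σ := √(s₁ ^ 2 + s₂ ^ 2)
  set ν := (μ₁ * s₂ ^ 2 + μ₂ * s₁ ^ 2) / (s₁ ^ 2 + s₂ ^ 2)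
  have hscale : 1 / s₁ * (1 / s₂) = 1 / σ * (1 / (s₁ * s₂ / σ)) := by field_simp
  have hsquare : ((u - μ₁) / s₁) ^ 2 + ((u - μ₂) / s₂) ^ 2 =
      ((μ₁ - μ₂) / σ) ^ 2 + ((u - ν) / (s₁ * s₂ / σ)) ^ 2 := by
    rw [div_pow (μ₁ - μ₂), div_pow (u - ν), div_pow (s₁ * s₂), hσsq]
    simp only [ν]
    field_simp
    ring
  simp only [normalPDF]
  rw [mul_mul_mul_comm (1 / s₁), mul_mul_mul_comm (1 / σ), hscale,
    stdNormalPDF_mul_stdNormalPDF_of_sq_add_sq_eq hsquare]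

lemma integrable_normalPDF_mul_normalPDF (μ₁ μ₂ : ℝ) {s₁ s₂ : ℝ} (h₁ : s₁ ≠ 0) (h₂ : s₂ ≠ 0) :
    Integrable fun u => normalPDF μ₁ s₁ u * normalPDF μ₂ s₂ u := by
  simp_rw [normalPDF_mul_normalPDF μ₁ μ₂ h₁ h₂]
  exact (integrable_normalPDF _ _ (by positivity)).const_mul _

lemma setIntegral_Ioi_normalPDF_mul_normalPDF (μ₁ μ₂ : ℝ) {s₁ s₂ : ℝ} (h₁ : 0 < s₁)
    (h₂ : 0 < s₂) :
    ∫ u in Ioi 0, normalPDF μ₁ s₁ u * normalPDF μ₂ s₂ u =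
      normalPDF μ₂ √(s₁ ^ 2 + s₂ ^ 2) μ₁ *
        stdNormalCDF ((μ₁ * s₂ ^ 2 + μ₂ * s₁ ^ 2) / (√(s₁ ^ 2 + s₂ ^ 2) * s₁ * s₂)) := by
  have hpos : 0 < s₁ ^ 2 + s₂ ^ 2 := by positivity
  simp_rw [normalPDF_mul_normalPDF μ₁ μ₂ h₁.ne' h₂.ne', integral_const_mul]
  rw [setIntegral_Ioi_normalPDF _ _ (by positivity)]
  congr 2
  field_simp
  rw [sq_sqrt hpos.le]

/-- closed form of the convolution of a normal density (mean `m`,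
variance `s_V²`) and a folded normal density (location `ζ`, scale `s_U²`) truncated to
`u ≥ 0`: the conditional density of the composite error term `ε = V − U` given the control
functions in the normal–folded-normal stochastic frontier model. -/
theorem convolution_normal_foldedNormal
    (sU sV : ℝ) (hU : 0 < sU) (hV : 0 < sV) (m ζ : ℝ)
    (σ : ℝ) (hσ : σ = Real.sqrt (sU ^ 2 + sV ^ 2))
    (lam : ℝ) (hlam : lam = sU / sV)
    (ε : ℝ) :
    (∫ u in Set.Ioi (0 : ℝ),
        (1 / sV) * stdNormalPDF ((ε + u - m) / sV) *
          ((1 / sU) * (stdNormalPDF ((u - ζ) / sU) + stdNormalPDF ((u + ζ) / sU)))) =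
      (1 / σ) *
        (stdNormalCDF (ζ / (lam * σ) - lam * (ε - m) / σ) * stdNormalPDF ((ε - m + ζ) / σ) +
          stdNormalCDF (-ζ / (lam * σ) - lam * (ε - m) / σ) * stdNormalPDF ((ε - m - ζ) / σ)) := by
  have hsplit : ∀ u, (1 / sV) * stdNormalPDF ((ε + u - m) / sV) *
      ((1 / sU) * (stdNormalPDF ((u - ζ) / sU) + stdNormalPDF ((u + ζ) / sU))) =
        normalPDF (m - ε) sV u * normalPDF ζ sU u +
          normalPDF (m - ε) sV u * normalPDF (-ζ) sU u := by
    intro u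
    simp only [normalPDF]
    ring_nf
  simp_rw [hsplit]
  rw [integral_add (integrable_normalPDF_mul_normalPDF _ _ hV.ne' hU.ne').integrableOn
    (integrable_normalPDF_mul_normalPDF _ _ hV.ne' hU.ne').integrableOn,
    setIntegral_Ioi_normalPDF_mul_normalPDF _ _ hV hU,
    setIntegral_Ioi_normalPDF_mul_normalPDF _ _ hV hU, add_comm (sV ^ 2), ← hσ]
  have hφ : ∀ z, normalPDF z σ (m - ε) = 1 / σ * stdNormalPDF ((ε - m + z) / σ) := fun z => by
    rw [normalPDF, ← stdNormalPDF_neg]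
    ring_nf
  have hΦ : ∀ z, ((m - ε) * sU ^ 2 + z * sV ^ 2) / (σ * sV * sU) =
      z / (lam * σ) - lam * (ε - m) / σ := fun z => by
    subst hlam
    field_simp
    ring
  rw [hφ, hφ, hΦ, hΦ, ← sub_eq_add_neg]
  ring
end

section
/- Let s_U > 0, s_V > 0, ζ ∈ ℝ, and set σ = √(s_U² + s_V²), λ = s_U/s_V, ξ = ζ/(λσ). Then ∫_ℝ (1/σ) Φ(ξ − λω/σ) φ((ω + ζ)/σ) dω = Φ(ζ/s_U) and ∫_ℝ (1/σ) Φ(−ξ − λω/σ) φ((ω − ζ)/σ) dω = Φ(−ζ/s_U). In words: the two components of the closed-form conditional density of the composite error term have total masses Φ(ζ/s_U) and Φ(−ζ/s_U) respectively, so the density is a mixture of two extended skew-normal densities with these mixing probabilities (which sum to one). -/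
open MeasureTheory

/-!
If `X` and `Y` are independent standard normal variables, then
`∫ φ(x) Φ(a + b x) dx = P(Y - b X < a)`, and `Y - b X` is centred normal with variance
`1 + b²`, so the integral is `Φ(a / √(1 + b²))`. The substitution `x = (ω + ζ) / σ` puts each
mixture component in this form with `b = -λ`, and `√(1 + λ²) = σ / s_V` turns the resulting
argument `(ξ + λζ/σ) / √(1 + λ²)` into `ζ / s_U`. The second component is the first one with
`ζ` replaced by `-ζ`.
-/

open ProbabilityTheory Set NNReal

lemma stdNormalPDF_eq_gaussianPDFReal : stdNormalPDF = gaussianPDFReal 0 1 := by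
  ext x
  simp [stdNormalPDF, gaussianPDFReal]

lemma stdNormalCDF_eq_gaussianReal_real (x : ℝ) :
    stdNormalCDF x = (gaussianReal 0 1).real (Iio x) := by
  rw [measureReal_def, gaussianReal_apply_eq_integral _ one_ne_zero, ENNReal.toReal_ofReal
    (setIntegral_nonneg measurableSet_Iio fun t _ ↦ gaussianPDFReal_nonneg _ _ t),
    stdNormalCDF, stdNormalPDF_eq_gaussianPDFReal]

lemma gaussianReal_real_Iio_eq_stdNormalCDF {v : ℝ≥0} (hv : v ≠ 0) (a : ℝ) :
    (gaussianReal 0 v).real (Iio a) = stdNormalCDF (a / √v) := by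
  have hsqrt : 0 < √(v : ℝ) := Real.sqrt_pos.2 (by positivity)
  have hmap : (gaussianReal 0 1).map (√v * ·) = gaussianReal 0 v := by
    rw [gaussianReal_map_const_mul, mul_zero, mul_one]
    congr
    exact Real.sq_sqrt v.2
  rw [stdNormalCDF_eq_gaussianReal_real, ← hmap,
    map_measureReal_apply (by fun_prop) measurableSet_Iio]
  congr 1 with x
  simp [lt_div_iff₀ hsqrt, mul_comm]

lemma MeasureTheory.Measure.conv_real_Iio (μ ν : Measure ℝ) [IsFiniteMeasure ν] (a : ℝ) :
    (μ ∗ ν).real (Iio a) = ∫ x, ν.real (Iio (a - x)) ∂μ := by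
  have hs : MeasurableSet ((fun p : ℝ × ℝ ↦ p.1 + p.2) ⁻¹' Iio a) :=
    measurableSet_Iio.preimage (by fun_prop)
  rw [measureReal_def, Measure.conv, Measure.map_apply (by fun_prop) measurableSet_Iio,
    Measure.prod_apply hs, ← integral_toReal (measurable_measure_prodMk_left hs).aemeasurable
      (ae_of_all _ fun _ ↦ measure_lt_top _ _)]
  congr 1 with x
  rw [measureReal_def]
  congr 2 with y
  simp [lt_sub_iff_add_lt']

lemma integral_stdNormalPDF_mul_stdNormalCDF (a b : ℝ) :
    ∫ x, stdNormalPDF x * stdNormalCDF (a + b * x) = stdNormalCDF (a / √(1 + b ^ 2)) := by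
  set N := gaussianReal 0 1
  have hmeas : Measurable fun y ↦ N.real (Iio (a - y)) :=
    Antitone.measurable fun y y' h ↦ measureReal_mono (Iio_subset_Iio (by linarith))
  calc ∫ x, stdNormalPDF x * stdNormalCDF (a + b * x)
      = ∫ x, N.real (Iio (a - -b * x)) ∂N := by
        simp [integral_gaussianReal_eq_integral_smul, N, ← stdNormalPDF_eq_gaussianPDFReal,
          stdNormalCDF_eq_gaussianReal_real]
    _ = ∫ y, N.real (Iio (a - y)) ∂N.map (-b * ·) :=
        (integral_map (by fun_prop) hmeas.aestronglyMeasurable).symm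
    _ = (N.map (-b * ·) ∗ N).real (Iio a) := (Measure.conv_real_Iio _ _ a).symm
    _ = (gaussianReal 0 (⟨1 + b ^ 2, by positivity⟩ : ℝ≥0)).real (Iio a) := by
        rw [gaussianReal_map_const_mul, gaussianReal_conv_gaussianReal]
        congr 2
        · simp
        · ext
          change (-b) ^ 2 * 1 + 1 = 1 + b ^ 2
          ring
    _ = stdNormalCDF (a / √(1 + b ^ 2)) := by
        refine gaussianReal_real_Iio_eq_stdNormalCDF (ne_of_gt ?_) a
        change (0 : ℝ) < 1 + b ^ 2
        positivity

lemma integral_inv_mul_stdNormalCDF_mul_stdNormalPDF (A lam ζ : ℝ) {σ : ℝ} (hσ : 0 < σ) :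
    ∫ ω, (1 / σ) * stdNormalCDF (A - lam * ω / σ) * stdNormalPDF ((ω + ζ) / σ) =
      stdNormalCDF ((A + lam * ζ / σ) / √(1 + lam ^ 2)) := by
  set g : ℝ → ℝ := fun x ↦ stdNormalPDF x * stdNormalCDF (A + lam * ζ / σ + -lam * x)
  have hg : ∀ ω, (1 / σ) * stdNormalCDF (A - lam * ω / σ) * stdNormalPDF ((ω + ζ) / σ) =
      σ⁻¹ * g ((ω + ζ) / σ) := fun ω ↦ by
    have harg : A + lam * ζ / σ + -lam * ((ω + ζ) / σ) = A - lam * ω / σ := by ring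
    simp only [g, harg]
    ring
  simp_rw [hg, integral_const_mul, integral_add_right_eq_self (fun ω ↦ g (ω / σ)),
    Measure.integral_comp_div g σ, abs_of_pos hσ, smul_eq_mul, g,
    integral_stdNormalPDF_mul_stdNormalCDF, neg_sq]
  field_simp

/-- the two components of the closed-form conditional density of the composite
error term have total masses `Φ(ζ/s_U)` and `Φ(−ζ/s_U)` respectively. -/
theorem mixing_probabilities
    (sU sV ζ : ℝ) (hU : 0 < sU) (hV : 0 < sV)
    (σ : ℝ) (hσ : σ = Real.sqrt (sU ^ 2 + sV ^ 2))
    (lam : ℝ) (hlam : lam = sU / sV)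
    (ξ : ℝ) (hξ : ξ = ζ / (lam * σ)) :
    (∫ ω : ℝ, (1 / σ) * stdNormalCDF (ξ - lam * ω / σ) * stdNormalPDF ((ω + ζ) / σ)) =
        stdNormalCDF (ζ / sU) ∧
      (∫ ω : ℝ, (1 / σ) * stdNormalCDF (-ξ - lam * ω / σ) * stdNormalPDF ((ω - ζ) / σ)) =
        stdNormalCDF (-ζ / sU) := by
  have hσpos : 0 < σ := hσ ▸ Real.sqrt_pos.2 (by positivity)
  have hσsq : σ ^ 2 = sU ^ 2 + sV ^ 2 := hσ ▸ Real.sq_sqrt (by positivity)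
  have hscale : √(1 + lam ^ 2) = σ / sV := by
    rw [Real.sqrt_eq_iff_mul_self_eq_of_pos (by positivity), hlam]
    field_simp
    linarith
  have harg : (ξ + lam * ζ / σ) / √(1 + lam ^ 2) = ζ / sU := by
    rw [hscale, hξ, hlam]
    field_simp
    linear_combination (-ζ) * hσsq
  have hneg := integral_inv_mul_stdNormalCDF_mul_stdNormalPDF (-ξ) lam (-ζ) hσpos
  simp only [← sub_eq_add_neg] at hneg
  refine ⟨by rw [integral_inv_mul_stdNormalCDF_mul_stdNormalPDF ξ lam ζ hσpos, harg], ?_⟩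
  rw [hneg, neg_div, ← harg]
  congr 1
  ring
end

section
/- Fix d ≥ 1, a symmetric positive definite d×d real matrix C, a vector a ∈ ℝ^d, and reals σ_U > 0, σ̃_V > 0, g > 0, m ∈ ℝ. For ρ ∈ ℝ^d with ρᵀC⁻¹ρ < 1 define σ̃_U(ρ) = σ_U g √(1 − ρᵀC⁻¹ρ), ζ(ρ) = g σ_U ρᵀC⁻¹a, σ(ρ) = √(σ̃_V² + σ̃_U(ρ)²), λ(ρ) = σ̃_U(ρ)/σ̃_V, ξ(ρ) = ζ(ρ)/(λ(ρ)σ(ρ)), and for ε ∈ ℝ with ω = ε − m, f(ε; ρ) = (1/σ(ρ))[Φ(ξ(ρ) − λ(ρ)ω/σ(ρ)) φ((ω + ζ(ρ))/σ(ρ)) + Φ(−ξ(ρ) − λ(ρ)ω/σ(ρ)) φ((ω − ζ(ρ))/σ(ρ))]. Then for every such ρ and every ε ∈ ℝ, f(ε; −ρ) = f(ε; ρ). In particular the log-likelihood of the model is an even function of the dependence-parameter vector ρ_U, so the sign of ρ_U is not identified. -/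
open Matrix MeasureTheory

/-- The closed-form conditional density of the composite error term given the control
functions in the normal–folded-normal stochastic frontier model, viewed as a function of
the dependence-parameter vector `ρ`. -/
noncomputable def densF (d : ℕ) (C : Matrix (Fin d) (Fin d) ℝ) (a : Fin d → ℝ)
    (σU σV g m : ℝ) (ρ : Fin d → ℝ) (ε : ℝ) : ℝ :=
  let sU : ℝ := σU * g * Real.sqrt (1 - ρ ⬝ᵥ (C⁻¹ *ᵥ ρ))
  let ζ : ℝ := g * σU * (ρ ⬝ᵥ (C⁻¹ *ᵥ a))
  let σ : ℝ := Real.sqrt (σV ^ 2 + sU ^ 2)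
  let lam : ℝ := sU / σV
  let ξ : ℝ := ζ / (lam * σ)
  let ω : ℝ := ε - m
  (1 / σ) * (stdNormalCDF (ξ - lam * ω / σ) * stdNormalPDF ((ω + ζ) / σ) +
    stdNormalCDF (-ξ - lam * ω / σ) * stdNormalPDF ((ω - ζ) / σ))

theorem densF_even_in_rho_general
    (d : ℕ)
    (C : Matrix (Fin d) (Fin d) ℝ)
    (a : Fin d → ℝ) (σU σV g m : ℝ) :
    ∀ ρ : Fin d → ℝ, ρ ⬝ᵥ (C⁻¹ *ᵥ ρ) < 1 →
      ∀ ε : ℝ, densF d C a σU σV g m (-ρ) ε = densF d C a σU σV g m ρ ε := by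
  intro ρ _ ε
  have hquad : (-ρ) ⬝ᵥ (C⁻¹ *ᵥ -ρ) = ρ ⬝ᵥ (C⁻¹ *ᵥ ρ) := by
    rw [mulVec_neg, dotProduct_neg, neg_dotProduct, neg_neg]
  -- `σ̃_U`, `σ` and `λ` are unchanged while `ζ` and `ξ` change sign: the two summands swap.
  simp only [densF, hquad, neg_dotProduct, mul_neg, neg_div, neg_neg, sub_neg_eq_add,
    ← sub_eq_add_neg]
  congr 1
  exact add_comm _ _

/-- the conditional density of the composite error term is an even function of
the dependence-parameter vector `ρ`, so the sign of `ρ_U` is not identified. -/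
theorem densF_even_in_rho
    (d : ℕ) (hd : 1 ≤ d)
    (C : Matrix (Fin d) (Fin d) ℝ) (hC : C.PosDef)
    (a : Fin d → ℝ) (σU σV g m : ℝ)
    (hσU : 0 < σU) (hσV : 0 < σV) (hg : 0 < g) :
    ∀ ρ : Fin d → ℝ, ρ ⬝ᵥ (C⁻¹ *ᵥ ρ) < 1 →
      ∀ ε : ℝ, densF d C a σU σV g m (-ρ) ε = densF d C a σU σV g m ρ ε :=
  densF_even_in_rho_general d C a σU σV g m
end
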